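/- arXiv:2204.10450 — 9 statements merged into one kernel-verified Lean document; each statement's English description precedes it below -/
import Mathlib

section
/- Let X₁,…,X_d be Hermitian n×n complex matrices. For any two points λ, ν ∈ ℝ^d, |μ^Q_λ(X₁,…,X_d) − μ^Q_ν(X₁,…,X_d)| ≤ ‖λ − ν‖, where the norm on the right is the Euclidean norm on ℝ^d. That is, the indicator function of the quadratic pseudospectrum is Lipschitz with constant 1. -/
/-- The smallest real eigenvalue of a matrix: for a Hermitian matrix this is the
smallest eigenvalue. -/
noncomputable def minEig {m : Type*} [Fintype m] [DecidableEq m] (A : Matrix m m ℂ) : ℝ :=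
  sInf {c : ℝ | (c : ℂ) ∈ spectrum ℂ A}

/-- The quadratic composite operator `Q_λ(X₁,…,X_d) = Σ_j (X_j − λ_j I)²`. -/
noncomputable def Qop {n d : ℕ} (X : Fin d → Matrix (Fin n) (Fin n) ℂ) (lam : Fin d → ℝ) :
    Matrix (Fin n) (Fin n) ℂ :=
  ∑ j, (X j - (lam j : ℂ) • 1) ^ 2

/-! For a unit vector `v`, `re ⟪Q_λ v, v⟫ = Σ_j ‖(X_j − λ_j) v‖²` is the squared `ℓ²`-norm of the
family `((X_j − λ_j) v)_j`, and replacing `λ` by `ν` moves that family by `((ν_j − λ_j) v)_j`, of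
norm `‖λ − ν‖`. Testing the quadratic form of `Q_λ` on a unit eigenvector of `Q_ν` for its smallest
eigenvalue, the triangle inequality in `ℓ²` gives `μ_λ ≤ μ_ν + ‖λ − ν‖`. -/

open scoped ComplexOrder InnerProductSpace
open Matrix

lemma sqrt_sum_norm_add_sq_le {ι E : Type*} [Fintype ι] [SeminormedAddCommGroup E] (a b : ι → E) :
    √(∑ i, ‖a i + b i‖ ^ 2) ≤ √(∑ i, ‖a i‖ ^ 2) + √(∑ i, ‖b i‖ ^ 2) := by
  simpa [PiLp.norm_eq_of_L2] using norm_add_le (WithLp.toLp 2 a) (WithLp.toLp 2 b)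

section RCLike

variable {𝕜 m : Type*} [RCLike 𝕜] [Fintype m] [DecidableEq m]

lemma Matrix.toEuclideanLin_sub_smul_one_apply (A : Matrix m m 𝕜) (c : 𝕜)
    (v : EuclideanSpace 𝕜 m) : toEuclideanLin (A - c • 1) v = toEuclideanLin A v - c • v := by
  simp [toLpLin_one]

lemma Matrix.IsHermitian.inner_toEuclideanLin_sq_self {B : Matrix m m 𝕜} (hB : B.IsHermitian)
    (v : EuclideanSpace 𝕜 m) :
    ⟪toEuclideanLin (B ^ 2) v, v⟫_𝕜 = (‖toEuclideanLin B v‖ ^ 2 : 𝕜) := by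
  rw [toLpLin_pow, pow_two, Module.End.mul_apply, isSymmetric_toEuclideanLin_iff.mpr hB,
    inner_self_eq_norm_sq_to_K]

end RCLike

lemma Matrix.IsHermitian.sub_real_smul_one {m : Type*} [DecidableEq m] {A : Matrix m m ℂ}
    (hA : A.IsHermitian) (c : ℝ) : (A - (c : ℂ) • 1).IsHermitian :=
  hA.sub (isHermitian_one.smul (Complex.conj_ofReal c))

namespace Matrix.IsHermitian

variable {m : Type*} [Fintype m] [DecidableEq m] {A : Matrix m m ℂ}

lemma minEig_eq_iInf_eigenvalues (hA : A.IsHermitian) : minEig A = ⨅ i, hA.eigenvalues i := by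
  simp [minEig, hA.spectrum_eq_image_range, iInf, Set.range]

lemma minEig_le_eigenvalues (hA : A.IsHermitian) (i : m) : minEig A ≤ hA.eigenvalues i :=
  hA.minEig_eq_iInf_eigenvalues ▸ ciInf_le (Set.finite_range _).bddBelow i

lemma posSemidef_sub_minEig_smul_one (hA : A.IsHermitian) :
    (A - (minEig A : ℂ) • 1).PosSemidef := by
  refine posSemidef_iff_isHermitian_and_spectrum_nonneg.mpr ⟨hA.sub_real_smul_one _, ?_⟩
  rw [← Algebra.algebraMap_eq_smul_one, ← spectrum.sub_singleton_eq, hA.spectrum_eq_image_range]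
  rintro _ ⟨_, ⟨_, ⟨i, rfl⟩, rfl⟩, _, rfl, rfl⟩
  simpa [← Complex.ofReal_sub] using hA.minEig_le_eigenvalues i

lemma minEig_mul_norm_sq_le_re_inner (hA : A.IsHermitian) (v : EuclideanSpace ℂ m) :
    minEig A * ‖v‖ ^ 2 ≤ RCLike.re ⟪toEuclideanLin A v, v⟫_ℂ := by
  have h :=
    (isPositive_toEuclideanLin_iff.mpr hA.posSemidef_sub_minEig_smul_one).re_inner_nonneg_left v
  rw [toEuclideanLin_sub_smul_one_apply, inner_sub_left, inner_smul_left,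
    inner_self_eq_norm_sq_to_K] at h
  simpa [← Complex.ofReal_pow] using h

lemma exists_norm_eq_one_re_inner_eq_minEig [Nonempty m] (hA : A.IsHermitian) :
    ∃ v : EuclideanSpace ℂ m, ‖v‖ = 1 ∧ RCLike.re ⟪toEuclideanLin A v, v⟫_ℂ = minEig A := by
  obtain ⟨i, hi⟩ := exists_eq_ciInf_of_finite (f := hA.eigenvalues)
  refine ⟨hA.eigenvectorBasis i, hA.eigenvectorBasis.orthonormal.1 i, ?_⟩
  have hv : toEuclideanLin A (hA.eigenvectorBasis i) =
      (hA.eigenvalues i : ℂ) • hA.eigenvectorBasis i := by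
    apply WithLp.ofLp_injective
    simpa [ofLp_toLpLin, Complex.coe_smul] using hA.mulVec_eigenvectorBasis i
  simp [hv, hA.minEig_eq_iInf_eigenvalues, hi]

end Matrix.IsHermitian

section Qop

variable {n d : ℕ} {X : Fin d → Matrix (Fin n) (Fin n) ℂ}

lemma isHermitian_Qop (hX : ∀ j, (X j).IsHermitian) (lam : Fin d → ℝ) :
    (Qop X lam).IsHermitian :=
  isSelfAdjoint_sum _ fun j _ => ((hX j).sub_real_smul_one (lam j)).pow 2

lemma re_inner_Qop (hX : ∀ j, (X j).IsHermitian) (lam : Fin d → ℝ)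
    (v : EuclideanSpace ℂ (Fin n)) :
    RCLike.re ⟪toEuclideanLin (Qop X lam) v, v⟫_ℂ =
      ∑ j, ‖toEuclideanLin (X j - (lam j : ℂ) • 1) v‖ ^ 2 := by
  rw [Qop, map_sum, LinearMap.sum_apply, sum_inner, map_sum]
  refine Finset.sum_congr rfl fun j _ => ?_
  rw [((hX j).sub_real_smul_one (lam j)).inner_toEuclideanLin_sq_self, ← RCLike.ofReal_pow,
    RCLike.ofReal_re]

lemma sqrt_re_inner_Qop_le (hX : ∀ j, (X j).IsHermitian) (lam nu : Fin d → ℝ)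
    {v : EuclideanSpace ℂ (Fin n)} (hv : ‖v‖ = 1) :
    √(RCLike.re ⟪toEuclideanLin (Qop X lam) v, v⟫_ℂ) ≤
      √(RCLike.re ⟪toEuclideanLin (Qop X nu) v, v⟫_ℂ) + √(∑ j, (lam j - nu j) ^ 2) := by
  have hsplit : ∀ j, toEuclideanLin (X j - (lam j : ℂ) • 1) v =
      toEuclideanLin (X j - (nu j : ℂ) • 1) v + ((nu j - lam j : ℝ) : ℂ) • v := by
    intro j
    simp only [toEuclideanLin_sub_smul_one_apply, Complex.ofReal_sub, sub_smul]
    abel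
  have hshift : ∀ j, ‖((nu j - lam j : ℝ) : ℂ) • v‖ ^ 2 = (lam j - nu j) ^ 2 := by
    intro j
    rw [norm_smul, hv, mul_one, Complex.norm_real, Real.norm_eq_abs, sq_abs, ← neg_sub, neg_sq]
  simpa only [re_inner_Qop hX, hsplit, hshift] using
    sqrt_sum_norm_add_sq_le (fun j => toEuclideanLin (X j - (nu j : ℂ) • 1) v)
      (fun j => ((nu j - lam j : ℝ) : ℂ) • v)

lemma sqrt_minEig_Qop_le (hn : 0 < n) (hX : ∀ j, (X j).IsHermitian) (lam nu : Fin d → ℝ) :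
    √(minEig (Qop X lam)) ≤ √(minEig (Qop X nu)) + √(∑ j, (lam j - nu j) ^ 2) := by
  have : Nonempty (Fin n) := ⟨⟨0, hn⟩⟩
  obtain ⟨v, hv, hnu⟩ := (isHermitian_Qop hX nu).exists_norm_eq_one_re_inner_eq_minEig
  have hlam := (isHermitian_Qop hX lam).minEig_mul_norm_sq_le_re_inner v
  rw [hv, one_pow, mul_one] at hlam
  calc √(minEig (Qop X lam)) ≤ √(RCLike.re ⟪toEuclideanLin (Qop X lam) v, v⟫_ℂ) :=
        Real.sqrt_le_sqrt hlam
    _ ≤ √(minEig (Qop X nu)) + √(∑ j, (lam j - nu j) ^ 2) :=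
        hnu ▸ sqrt_re_inner_Qop_le hX lam nu hv

end Qop

/-- the indicator function `λ ↦ μ^Q_λ(X₁,…,X_d)` of the quadratic
pseudospectrum is Lipschitz with constant 1 (Euclidean norm on `ℝ^d`). -/
theorem quadratic_gap_lipschitz {n d : ℕ} (hn : 0 < n)
    (X : Fin d → Matrix (Fin n) (Fin n) ℂ) (hX : ∀ j, (X j).IsHermitian)
    (lam nu : Fin d → ℝ) :
    |Real.sqrt (minEig (Qop X lam)) - Real.sqrt (minEig (Qop X nu))| ≤
      Real.sqrt (∑ j, (lam j - nu j) ^ 2) := by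
  have hsymm : ∑ j, (nu j - lam j) ^ 2 = ∑ j, (lam j - nu j) ^ 2 := by
    simp only [← neg_sub (lam _), neg_sq]
  rw [abs_sub_le_iff, sub_le_iff_le_add', sub_le_iff_le_add']
  exact ⟨sqrt_minEig_Qop_le hn hX lam nu, hsymm ▸ sqrt_minEig_Qop_le hn hX nu lam⟩
end

section
/- Suppose X₁,…,X_d are Hermitian n×n complex matrices and S is a unitary n×n matrix such that SX_j = X_jS for all j = 1,…,d−1 while SX_d = −X_dS. Then for every λ ∈ ℝ^d, μ^Q_λ(X₁,…,X_d) = μ^Q_γ(X₁,…,X_d), where γ = (λ₁, λ₂, …, λ_{d−1}, −λ_d). -/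
/-- if a unitary `S` commutes with `X₁,…,X_{d-1}` and anticommutes
with `X_d`, then `μ^Q_λ = μ^Q_γ` where `γ = (λ₁,…,λ_{d−1},−λ_d)`. -/
theorem quadratic_gap_symmetry {n d : ℕ}
    (X : Fin (d + 1) → Matrix (Fin n) (Fin n) ℂ) (hX : ∀ j, (X j).IsHermitian)
    (S : Matrix (Fin n) (Fin n) ℂ) (hS : S ∈ Matrix.unitaryGroup (Fin n) ℂ)
    (hcomm : ∀ j : Fin d, S * X j.castSucc = X j.castSucc * S)
    (hanti : S * X (Fin.last d) = -(X (Fin.last d) * S))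
    (lam : Fin (d + 1) → ℝ) :
    Real.sqrt (minEig (Qop X lam)) =
      Real.sqrt (minEig (Qop X (Function.update lam (Fin.last d) (-(lam (Fin.last d)))))) := by
  have h1 : star S * S = 1 := hS.1
  have h2 : S * star S = 1 := hS.2
  set u : (Matrix (Fin n) (Fin n) ℂ)ˣ := ⟨S, star S, h2, h1⟩ with hu
  have key : Qop X (Function.update lam (Fin.last d) (-(lam (Fin.last d)))) =
      star S * Qop X lam * S := by
    unfold Qop
    rw [Finset.mul_sum, Finset.sum_mul]
    refine Finset.sum_congr rfl fun j _ => ?_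
    have sq : ∀ A : Matrix (Fin n) (Fin n) ℂ,
        star S * A ^ 2 * S = (star S * A * S) ^ 2 := by
      intro A
      have : (star S * A * S) ^ 2 = star S * A * (S * star S) * A * S := by
        rw [sq]; noncomm_ring
      rw [this, h2, mul_one, sq]; noncomm_ring
    rw [sq]
    induction j using Fin.lastCases with
    | last =>
      have hXS : star S * X (Fin.last d) * S = -X (Fin.last d) := by
        have : X (Fin.last d) * S = -(S * X (Fin.last d)) := by
          rw [hanti, neg_neg]
        rw [mul_assoc, this, mul_neg, ← mul_assoc, h1, one_mul]
      rw [Function.update_self]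
      have : star S * (X (Fin.last d) - ((lam (Fin.last d) : ℂ)) • 1) * S
          = -(X (Fin.last d) - ((-(lam (Fin.last d)) : ℝ) : ℂ) • 1) := by
        rw [mul_sub, sub_mul, hXS]
        push_cast
        rw [mul_smul_comm, smul_mul_assoc, mul_one, h1]
        module
      rw [this, neg_pow_two]
    | cast j =>
      have hne : (j.castSucc : Fin (d+1)) ≠ Fin.last d := (Fin.castSucc_lt_last j).ne
      rw [Function.update_of_ne hne]
      have hXS : star S * X j.castSucc * S = X j.castSucc := by
        rw [mul_assoc, ← hcomm j, ← mul_assoc, h1, one_mul]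
      rw [mul_sub, sub_mul, hXS, mul_smul_comm, smul_mul_assoc, mul_one, h1]
  have hspec : spectrum ℂ (star S * Qop X lam * S) = spectrum ℂ (Qop X lam) :=
    spectrum.units_conjugate' (u := u) (a := Qop X lam)
  rw [key]
  unfold minEig
  rw [hspec]
end

section
/- Suppose X₁,…,X_d are Hermitian n×n complex matrices, S is a unitary n×n matrix such that SX_j = X_jS for j = 1,…,d−1 and SX_d = −X_dS, Γ₁,…,Γ_d is a Clifford representation (Hermitian m×m matrices with Γ_j² = I and Γ_jΓ_k = −Γ_kΓ_j for j ≠ k), and R is a unitary m×m matrix such that RΓ_j = Γ_jR for j = 1,…,d−1 and RΓ_d = −Γ_dR. Then for every λ ∈ ℝ^d, with γ = (λ₁,…,λ_{d−1},−λ_d), the localizers satisfy (S⊗R) L_λ(X₁,…,X_d) (S⊗R)† = L_γ(X₁,…,X_d); in particular μ^C_λ(X₁,…,X_d) = μ^C_γ(X₁,…,X_d). -/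
open Kronecker Matrix

/-- The smallest singular value of a matrix: the infimum over unit vectors `v`
of `‖Av‖` (ℓ² norms). -/
noncomputable def sigmaMin {m p : Type*} [Fintype m] [Fintype p] [DecidableEq p]
    (A : Matrix m p ℂ) : ℝ :=
  ⨅ v : {v : EuclideanSpace ℂ p // ‖v‖ = 1}, ‖(Matrix.toEuclideanLin A) v.1‖

/-- The spectral localizer `L_λ(X₁,…,X_d) = Σ_j (X_j − λ_j I) ⊗ Γ_j`. -/
noncomputable def localizer {n m d : ℕ} (X : Fin d → Matrix (Fin n) (Fin n) ℂ)
    (Γ : Fin d → Matrix (Fin m) (Fin m) ℂ) (lam : Fin d → ℝ) :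
    Matrix (Fin n × Fin m) (Fin n × Fin m) ℂ :=
  ∑ j, (X j - (lam j : ℂ) • 1) ⊗ₖ Γ j

/-!
Conjugation by `S ⊗ R` acts on each summand `(X_j − λ_j) ⊗ Γ_j` of the localizer factorwise.
For `j < d` both factors are fixed. For `j = d` both factors change sign, giving
`(−X_d − λ_d) ⊗ (−Γ_d) = (X_d + λ_d) ⊗ Γ_d`, which is the summand of `L_γ`. The localizer
gaps then agree because multiplying by a unitary on either side leaves the smallest singular
value unchanged.
-/

namespace Matrix

variable {α l n : Type*}

theorem neg_kronecker_neg [Ring α] (A : Matrix l l α) (B : Matrix n n α) :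
    (-A) ⊗ₖ (-B) = A ⊗ₖ B := by
  ext; simp

theorem kronecker_conj_kronecker [Fintype l] [Fintype n] [CommRing α] [StarRing α]
    (S A : Matrix l l α) (R B : Matrix n n α) :
    (S ⊗ₖ R) * (A ⊗ₖ B) * (S ⊗ₖ R)ᴴ = (S * A * Sᴴ) ⊗ₖ (R * B * Rᴴ) := by
  rw [conjTranspose_kronecker, ← mul_kronecker_mul, ← mul_kronecker_mul]

section Unitary

variable [Fintype n] [DecidableEq n] [CommRing α] [StarRing α] {S : Matrix n n α}

theorem conj_eq_self_of_commute (hS : S ∈ unitaryGroup n α) {X : Matrix n n α}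
    (h : S * X = X * S) : S * X * Sᴴ = X := by
  rw [h, mul_assoc, ← star_eq_conjTranspose, Unitary.mul_star_self_of_mem hS, mul_one]

theorem conj_eq_neg_of_anticommute (hS : S ∈ unitaryGroup n α) {X : Matrix n n α}
    (h : S * X = -(X * S)) : S * X * Sᴴ = -X := by
  rw [h, neg_mul, mul_assoc, ← star_eq_conjTranspose, Unitary.mul_star_self_of_mem hS, mul_one]

theorem conj_sub_smul_one (hS : S ∈ unitaryGroup n α) (X : Matrix n n α) (c : α) :
    S * (X - c • 1) * Sᴴ = S * X * Sᴴ - c • 1 := by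
  rw [mul_sub, sub_mul, mul_smul_one, smul_mul_assoc, ← star_eq_conjTranspose,
    Unitary.mul_star_self_of_mem hS]

end Unitary

theorem norm_toEuclideanLin_of_mem_unitaryGroup {𝕜 : Type*} [RCLike 𝕜] [Fintype n]
    [DecidableEq n] {U : Matrix n n 𝕜} (hU : U ∈ unitaryGroup n 𝕜) (v : EuclideanSpace 𝕜 n) :
    ‖toEuclideanLin U v‖ = ‖v‖ := by
  simpa [← coe_toEuclideanCLM_eq_toEuclideanLin] using
    ContinuousLinearMap.norm_map_of_mem_unitary (Unitary.map_mem toEuclideanCLM hU) v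

end Matrix

section SigmaMin

variable {m p : Type*} [Fintype m] [Fintype p] [DecidableEq p]

theorem sigmaMin_unitary_mul [DecidableEq m] {U : Matrix m m ℂ} (hU : U ∈ unitaryGroup m ℂ)
    (A : Matrix m p ℂ) : sigmaMin (U * A) = sigmaMin A := by
  simp [sigmaMin, toLpLin_mul_same, norm_toEuclideanLin_of_mem_unitaryGroup hU]

theorem sigmaMin_mul_unitary {U : Matrix p p ℂ} (hU : U ∈ unitaryGroup p ℂ) (A : Matrix m p ℂ) :
    sigmaMin (A * U) = sigmaMin A := by
  let e := Unitary.linearIsometryEquiv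
    ⟨toEuclideanCLM (n := p) (𝕜 := ℂ) U, Unitary.map_mem toEuclideanCLM hU⟩
  refine Equiv.iInf_congr (e.toEquiv.subtypeEquiv fun v => by simp) fun v => ?_
  simp only [toLpLin_mul_same, LinearMap.comp_apply]
  rfl

theorem sigmaMin_unitary_conj {U : Matrix p p ℂ} (hU : U ∈ unitaryGroup p ℂ) (A : Matrix p p ℂ) :
    sigmaMin (U * A * Uᴴ) = sigmaMin A := by
  rw [sigmaMin_mul_unitary (star_eq_conjTranspose U ▸ Unitary.star_mem hU),
    sigmaMin_unitary_mul hU]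

end SigmaMin

theorem localizer_conj_kronecker {n m d : ℕ}
    (X : Fin (d + 1) → Matrix (Fin n) (Fin n) ℂ) (Γ : Fin (d + 1) → Matrix (Fin m) (Fin m) ℂ)
    {S : Matrix (Fin n) (Fin n) ℂ} (hS : S ∈ unitaryGroup (Fin n) ℂ)
    (hScomm : ∀ j : Fin d, S * X j.castSucc = X j.castSucc * S)
    (hSanti : S * X (Fin.last d) = -(X (Fin.last d) * S))
    {R : Matrix (Fin m) (Fin m) ℂ} (hR : R ∈ unitaryGroup (Fin m) ℂ)
    (hRcomm : ∀ j : Fin d, R * Γ j.castSucc = Γ j.castSucc * R)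
    (hRanti : R * Γ (Fin.last d) = -(Γ (Fin.last d) * R))
    (lam : Fin (d + 1) → ℝ) :
    (S ⊗ₖ R) * localizer X Γ lam * (S ⊗ₖ R)ᴴ =
      localizer X Γ (Function.update lam (Fin.last d) (-(lam (Fin.last d)))) := by
  simp only [localizer, Finset.mul_sum, Finset.sum_mul, kronecker_conj_kronecker,
    conj_sub_smul_one hS]
  rw [Fin.sum_univ_castSucc, Fin.sum_univ_castSucc]
  congr 1
  · refine Finset.sum_congr rfl fun j _ => ?_
    rw [conj_eq_self_of_commute hS (hScomm j), conj_eq_self_of_commute hR (hRcomm j),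
      Function.update_of_ne (Fin.castSucc_lt_last j).ne]
  · rw [conj_eq_neg_of_anticommute hS hSanti, conj_eq_neg_of_anticommute hR hRanti,
      Function.update_self, ← neg_kronecker_neg (X _ - _), Complex.ofReal_neg, neg_smul,
      sub_neg_eq_add, neg_add']

theorem localizer_symmetry_general {n m d : ℕ}
    (X : Fin (d + 1) → Matrix (Fin n) (Fin n) ℂ)
    (Γ : Fin (d + 1) → Matrix (Fin m) (Fin m) ℂ)
    (S : Matrix (Fin n) (Fin n) ℂ) (hS : S ∈ Matrix.unitaryGroup (Fin n) ℂ)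
    (hScomm : ∀ j : Fin d, S * X j.castSucc = X j.castSucc * S)
    (hSanti : S * X (Fin.last d) = -(X (Fin.last d) * S))
    (R : Matrix (Fin m) (Fin m) ℂ) (hR : R ∈ Matrix.unitaryGroup (Fin m) ℂ)
    (hRcomm : ∀ j : Fin d, R * Γ j.castSucc = Γ j.castSucc * R)
    (hRanti : R * Γ (Fin.last d) = -(Γ (Fin.last d) * R))
    (lam : Fin (d + 1) → ℝ) :
    (S ⊗ₖ R) * localizer X Γ lam * (S ⊗ₖ R)ᴴ =
        localizer X Γ (Function.update lam (Fin.last d) (-(lam (Fin.last d)))) ∧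
      sigmaMin (localizer X Γ lam) =
        sigmaMin (localizer X Γ (Function.update lam (Fin.last d) (-(lam (Fin.last d))))) := by
  have hconj := localizer_conj_kronecker X Γ hS hScomm hSanti hR hRcomm hRanti lam
  refine ⟨hconj, ?_⟩
  rw [← hconj, sigmaMin_unitary_conj (kronecker_mem_unitary hS hR)]

/-- if the unitary `S` commutes with `X₁,…,X_{d−1}` and anticommutes
with `X_d`, and the unitary `R` commutes with `Γ₁,…,Γ_{d−1}` and anticommutes with
`Γ_d`, then `(S⊗R) L_λ (S⊗R)† = L_γ` with `γ = (λ₁,…,λ_{d−1},−λ_d)`; in particular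
the localizer gaps at `λ` and `γ` agree. -/
theorem localizer_symmetry {n m d : ℕ}
    (X : Fin (d + 1) → Matrix (Fin n) (Fin n) ℂ) (hX : ∀ j, (X j).IsHermitian)
    (Γ : Fin (d + 1) → Matrix (Fin m) (Fin m) ℂ) (hΓherm : ∀ j, (Γ j).IsHermitian)
    (hΓsq : ∀ j, Γ j * Γ j = 1)
    (hΓanti : ∀ j k, j ≠ k → Γ j * Γ k = -(Γ k * Γ j))
    (S : Matrix (Fin n) (Fin n) ℂ) (hS : S ∈ Matrix.unitaryGroup (Fin n) ℂ)
    (hScomm : ∀ j : Fin d, S * X j.castSucc = X j.castSucc * S)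
    (hSanti : S * X (Fin.last d) = -(X (Fin.last d) * S))
    (R : Matrix (Fin m) (Fin m) ℂ) (hR : R ∈ Matrix.unitaryGroup (Fin m) ℂ)
    (hRcomm : ∀ j : Fin d, R * Γ j.castSucc = Γ j.castSucc * R)
    (hRanti : R * Γ (Fin.last d) = -(Γ (Fin.last d) * R))
    (lam : Fin (d + 1) → ℝ) :
    (S ⊗ₖ R) * localizer X Γ lam * (S ⊗ₖ R)ᴴ =
        localizer X Γ (Function.update lam (Fin.last d) (-(lam (Fin.last d)))) ∧
      sigmaMin (localizer X Γ lam) =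
        sigmaMin (localizer X Γ (Function.update lam (Fin.last d) (-(lam (Fin.last d))))) :=
  localizer_symmetry_general X Γ S hS hScomm hSanti R hR hRcomm hRanti lam
end

section
/- Let X, Y, H be Hermitian n×n complex matrices with XY = YX, and let λ = (x, y, E) ∈ ℝ³. Let L be the 2n×2n Hermitian block matrix L = [[H − E·I, (X − iY) − (x − iy)I], [(X + iY) − (x + iy)I, −(H − E·I)]] (the spectral localizer with Pauli matrices σ_x, σ_y, σ_z as the Clifford representation), and let Q = (X − xI)² + (Y − yI)² + (H − EI)². Then |σ_min(Q) − (σ_min(L))²| ≤ ‖[H, X + iY]‖, where σ_min denotes the smallest singular value and ‖·‖ the operator norm. -/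
open Matrix Complex

/-- The ℓ²-induced operator norm of a square matrix. -/
noncomputable def opNorm {m : Type*} [Fintype m] [DecidableEq m] (A : Matrix m m ℂ) : ℝ :=
  ‖Matrix.toEuclideanCLM (𝕜 := ℂ) A‖

/-!
With `A = X - x`, `B = Y - y`, `C = H - E` and `M = A + iB`, the localizer is
`L = [[C, Mᴴ], [M, -C]]`. Since `A` and `B` commute, `M` is normal with `MᴴM = MMᴴ = A² + B²`, so
`L² = [[Q, Kᴴ], [K, Q]]` with `K = [M, C] = -[H, X + iY]`: the localizer squares to `Q` up to an
off-diagonal commutator. As `L` is Hermitian, `σ_min(L)² = min_{‖w‖=1} ⟪L²w, w⟫`, and as `Q ≥ 0`,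
`σ_min(Q)` is its least eigenvalue `μ`. Testing on `(u, 0)` for a `μ`-eigenvector `u` gives
`σ_min(L)² ≤ μ`; for a unit `w = (a, b)`, `⟪L²w, w⟫ ≥ μ - 2‖K‖‖a‖‖b‖ ≥ μ - ‖K‖`.
-/

open scoped InnerProductSpace

theorem LinearMap.IsSymmetric.exists_unit_eigenvector_min {𝕜 E : Type*} [RCLike 𝕜]
    [NormedAddCommGroup E] [InnerProductSpace 𝕜 E] [FiniteDimensional 𝕜 E] [Nontrivial E]
    {T : E →ₗ[𝕜] E} (hT : T.IsSymmetric) :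
    ∃ μ : ℝ, ∃ u : E, ‖u‖ = 1 ∧ T u = (μ : 𝕜) • u ∧
      ∀ v, μ * ‖v‖ ^ 2 ≤ RCLike.re ⟪T v, v⟫_𝕜 := by
  set μ : ℝ := ⨅ x : {x : E // x ≠ 0}, RCLike.re ⟪T x, x⟫_𝕜 / ‖(x : E)‖ ^ 2
  obtain ⟨w, hw⟩ := hT.hasEigenvalue_iInf_of_finiteDimensional.exists_hasEigenvector
  have hw0 : ‖w‖ ≠ 0 := norm_ne_zero_iff.mpr hw.2
  refine ⟨μ, (‖w‖⁻¹ : 𝕜) • w, ?_, ?_, fun v => ?_⟩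
  · simp [norm_smul, hw0]
  · rw [map_smul, hw.apply_eq_smul, smul_comm]
  · rcases eq_or_ne v 0 with rfl | hv
    · simp
    have hbdd : BddBelow (Set.range fun x : {x : E // x ≠ 0} =>
        RCLike.re ⟪T x, x⟫_𝕜 / ‖(x : E)‖ ^ 2) :=
      ⟨-‖T.toContinuousLinearMap‖, by
        rintro _ ⟨x, rfl⟩
        exact (abs_le.mp (T.toContinuousLinearMap.rayleighQuotient_le_norm x)).1⟩
    have := ciInf_le hbdd ⟨v, hv⟩
    rwa [le_div_iff₀ (by positivity)] at this

section SigmaMin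

variable {m p : Type*} [Fintype m] [Fintype p] [DecidableEq p]

theorem sigmaMin_nonneg (A : Matrix m p ℂ) : 0 ≤ sigmaMin A :=
  Real.iInf_nonneg fun _ => norm_nonneg _

theorem sigmaMin_le_norm (A : Matrix m p ℂ) {v : EuclideanSpace ℂ p} (hv : ‖v‖ = 1) :
    sigmaMin A ≤ ‖toEuclideanLin A v‖ :=
  ciInf_le (f := fun w : {w : EuclideanSpace ℂ p // ‖w‖ = 1} => ‖toEuclideanLin A w.1‖)
    ⟨0, Set.forall_mem_range.2 fun _ => norm_nonneg _⟩ ⟨v, hv⟩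

theorem sigmaMin_sq_le_norm_sq (A : Matrix m p ℂ) {v : EuclideanSpace ℂ p} (hv : ‖v‖ = 1) :
    sigmaMin A ^ 2 ≤ ‖toEuclideanLin A v‖ ^ 2 :=
  pow_le_pow_left₀ (sigmaMin_nonneg A) (sigmaMin_le_norm A hv) 2

theorem le_sigmaMin [Nonempty p] {A : Matrix m p ℂ} {c : ℝ}
    (h : ∀ v : EuclideanSpace ℂ p, ‖v‖ = 1 → c ≤ ‖toEuclideanLin A v‖) : c ≤ sigmaMin A :=
  have : Nonempty {v : EuclideanSpace ℂ p // ‖v‖ = 1} :=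
    ⟨⟨EuclideanSpace.single (Classical.arbitrary p) 1, by simp⟩⟩
  le_ciInf fun v => h v.1 v.2

theorem le_sigmaMin_sq [Nonempty p] {A : Matrix m p ℂ} {c : ℝ}
    (h : ∀ v : EuclideanSpace ℂ p, ‖v‖ = 1 → c ≤ ‖toEuclideanLin A v‖ ^ 2) :
    c ≤ sigmaMin A ^ 2 := by
  rcases le_or_gt c 0 with hc | hc
  · exact hc.trans (sq_nonneg _)
  · have : √c ≤ sigmaMin A :=
      le_sigmaMin fun v hv => Real.sqrt_le_iff.mpr ⟨norm_nonneg _, h v hv⟩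
    calc c = √c ^ 2 := (Real.sq_sqrt hc.le).symm
      _ ≤ sigmaMin A ^ 2 := pow_le_pow_left₀ (Real.sqrt_nonneg c) this 2

theorem sigmaMin_of_isEmpty [IsEmpty p] (A : Matrix m p ℂ) : sigmaMin A = 0 := by
  have : IsEmpty {v : EuclideanSpace ℂ p // ‖v‖ = 1} :=
    ⟨fun v => by simpa [Subsingleton.elim v.1 0] using v.2⟩
  exact Real.iInf_of_isEmpty _

theorem sigmaMin_eq_of_eigenvector [Nonempty p] {A : Matrix p p ℂ} {μ : ℝ} (hμ : 0 ≤ μ)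
    {u : EuclideanSpace ℂ p} (hu : ‖u‖ = 1) (hAu : toEuclideanLin A u = (μ : ℂ) • u)
    (hmin : ∀ v, μ * ‖v‖ ^ 2 ≤ RCLike.re ⟪toEuclideanLin A v, v⟫_ℂ) : sigmaMin A = μ := by
  refine le_antisymm ?_ (le_sigmaMin fun v hv => ?_)
  · simpa [hAu, norm_smul, hu, abs_of_nonneg hμ] using sigmaMin_le_norm A hu
  · calc μ = μ * ‖v‖ ^ 2 := by simp [hv]
      _ ≤ RCLike.re ⟪toEuclideanLin A v, v⟫_ℂ := hmin v
      _ ≤ ‖toEuclideanLin A v‖ * ‖v‖ := re_inner_le_norm _ _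
      _ = ‖toEuclideanLin A v‖ := by rw [hv, mul_one]

end SigmaMin

section Blocks

variable {𝕜 : Type*} {m n : Type*}

namespace EuclideanSpace

def sumElim (a : EuclideanSpace 𝕜 m) (b : EuclideanSpace 𝕜 n) :
    EuclideanSpace 𝕜 (m ⊕ n) :=
  WithLp.toLp 2 (Sum.elim a.ofLp b.ofLp)

theorem exists_eq_sumElim (w : EuclideanSpace 𝕜 (m ⊕ n)) :
    ∃ a b, w = sumElim (𝕜 := 𝕜) a b :=
  ⟨WithLp.toLp 2 (w.ofLp ∘ Sum.inl), WithLp.toLp 2 (w.ofLp ∘ Sum.inr), by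
    ext (i | i) <;> rfl⟩

variable [RCLike 𝕜] [Fintype m] [Fintype n]

theorem inner_sumElim (a c : EuclideanSpace 𝕜 m) (b d : EuclideanSpace 𝕜 n) :
    ⟪sumElim a b, sumElim c d⟫_𝕜 = ⟪a, c⟫_𝕜 + ⟪b, d⟫_𝕜 := by
  simp only [sumElim, inner_toLp_toLp, Function.star_sumElim, sumElim_dotProduct_sumElim]
  rfl

theorem norm_sumElim_sq (a : EuclideanSpace 𝕜 m) (b : EuclideanSpace 𝕜 n) :
    ‖sumElim a b‖ ^ 2 = ‖a‖ ^ 2 + ‖b‖ ^ 2 := by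
  simp only [← inner_self_eq_norm_sq (𝕜 := 𝕜), inner_sumElim, map_add]

end EuclideanSpace

open EuclideanSpace

variable [RCLike 𝕜] [Fintype m] [Fintype n] [DecidableEq m] [DecidableEq n]

theorem toEuclideanLin_fromBlocks_sumElim (A : Matrix m m 𝕜) (B : Matrix m n 𝕜)
    (C : Matrix n m 𝕜) (D : Matrix n n 𝕜) (a : EuclideanSpace 𝕜 m) (b : EuclideanSpace 𝕜 n) :
    toEuclideanLin (fromBlocks A B C D) (sumElim a b) =
      sumElim (toEuclideanLin A a + toEuclideanLin B b)
        (toEuclideanLin C a + toEuclideanLin D b) := by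
  simp [sumElim, toLpLin_toLp, fromBlocks_mulVec]

theorem inner_toEuclideanLin_fromBlocks_sumElim (A : Matrix m m 𝕜) (B : Matrix m n 𝕜)
    (C : Matrix n m 𝕜) (D : Matrix n n 𝕜) (a : EuclideanSpace 𝕜 m) (b : EuclideanSpace 𝕜 n) :
    ⟪toEuclideanLin (fromBlocks A B C D) (sumElim a b), sumElim a b⟫_𝕜 =
      ⟪toEuclideanLin A a, a⟫_𝕜 + ⟪toEuclideanLin B b, a⟫_𝕜 +
        ⟪toEuclideanLin C a, b⟫_𝕜 + ⟪toEuclideanLin D b, b⟫_𝕜 := by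
  rw [toEuclideanLin_fromBlocks_sumElim, inner_sumElim, inner_add_left, inner_add_left]
  ring

theorem norm_toEuclideanLin_sumElim_sq {L : Matrix (m ⊕ m) (m ⊕ m) 𝕜} {Q K : Matrix m m 𝕜}
    (hL : L.IsHermitian) (hLL : L * L = fromBlocks Q Kᴴ K Q) (a b : EuclideanSpace 𝕜 m) :
    ‖toEuclideanLin L (sumElim a b)‖ ^ 2 =
      RCLike.re ⟪toEuclideanLin Q a, a⟫_𝕜 + RCLike.re ⟪toEuclideanLin Q b, b⟫_𝕜 +
        2 * RCLike.re ⟪toEuclideanLin K a, b⟫_𝕜 := by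
  have hsym := isSymmetric_toEuclideanLin_iff.mpr hL
  have hadj : ⟪toEuclideanLin Kᴴ b, a⟫_𝕜 = ⟪b, toEuclideanLin K a⟫_𝕜 := by
    rw [toEuclideanLin_conjTranspose_eq_adjoint, LinearMap.adjoint_inner_left]
  rw [← inner_self_eq_norm_sq (𝕜 := 𝕜), ← hsym, ← LinearMap.comp_apply, ← toLpLin_mul_same,
    hLL, inner_toEuclideanLin_fromBlocks_sumElim, hadj, map_add, map_add, map_add, inner_re_symm b]
  ring

end Blocks

section BlockGap

variable {m : Type*} [Fintype m] [DecidableEq m]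

open EuclideanSpace

theorem opNorm_nonneg (K : Matrix m m ℂ) : 0 ≤ opNorm K := norm_nonneg _

theorem opNorm_neg (K : Matrix m m ℂ) : opNorm (-K) = opNorm K := by
  rw [opNorm, map_neg, norm_neg, opNorm]

theorem norm_toEuclideanLin_le_opNorm (K : Matrix m m ℂ) (v : EuclideanSpace ℂ m) :
    ‖toEuclideanLin K v‖ ≤ opNorm K * ‖v‖ :=
  (toEuclideanCLM (𝕜 := ℂ) K).le_opNorm v

theorem abs_re_inner_toEuclideanLin_le (K : Matrix m m ℂ) (a b : EuclideanSpace ℂ m) :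
    |RCLike.re ⟪toEuclideanLin K a, b⟫_ℂ| ≤ opNorm K * ‖a‖ * ‖b‖ :=
  calc |RCLike.re ⟪toEuclideanLin K a, b⟫_ℂ| ≤ ‖⟪toEuclideanLin K a, b⟫_ℂ‖ :=
        RCLike.abs_re_le_norm _
    _ ≤ ‖toEuclideanLin K a‖ * ‖b‖ := norm_inner_le_norm _ _
    _ ≤ opNorm K * ‖a‖ * ‖b‖ := by gcongr; exact norm_toEuclideanLin_le_opNorm K a

theorem abs_sigmaMin_sub_sigmaMin_sq_le_opNorm {L : Matrix (m ⊕ m) (m ⊕ m) ℂ}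
    {Q K : Matrix m m ℂ} (hL : L.IsHermitian) (hLL : L * L = fromBlocks Q Kᴴ K Q) :
    |sigmaMin Q - sigmaMin L ^ 2| ≤ opNorm K := by
  rcases isEmpty_or_nonempty m with hm | hm
  · simp [sigmaMin_of_isEmpty, opNorm_nonneg]
  have hQ : Q.IsHermitian :=
    (isHermitian_fromBlocks_iff.mp (hLL ▸ hL.eq ▸ isHermitian_mul_conjTranspose_self L)).1
  obtain ⟨μ, u, hu, hQu, hmin⟩ :=
    (isSymmetric_toEuclideanLin_iff.mpr hQ).exists_unit_eigenvector_min
  have hform := norm_toEuclideanLin_sumElim_sq hL hLL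
  have hu0 : ‖sumElim u (0 : EuclideanSpace ℂ m)‖ = 1 := by
    refine (pow_left_inj₀ (norm_nonneg _) zero_le_one two_ne_zero).mp ?_
    rw [norm_sumElim_sq, hu]; simp
  have hLu : ‖toEuclideanLin L (sumElim u (0 : EuclideanSpace ℂ m))‖ ^ 2 = μ := by
    rw [hform, hQu, inner_smul_left, inner_self_eq_norm_sq_to_K, hu]
    simp
  have hσQ : sigmaMin Q = μ := sigmaMin_eq_of_eigenvector (hLu ▸ sq_nonneg _) hu hQu hmin
  have hupper : sigmaMin L ^ 2 ≤ μ := hLu ▸ sigmaMin_sq_le_norm_sq L hu0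
  have hlower : μ - opNorm K ≤ sigmaMin L ^ 2 := le_sigmaMin_sq fun w hw => by
    obtain ⟨a, b, rfl⟩ := exists_eq_sumElim w
    have hab : ‖a‖ ^ 2 + ‖b‖ ^ 2 = 1 := by rw [← norm_sumElim_sq, hw, one_pow]
    have hK := (abs_le.mp (abs_re_inner_toEuclideanLin_le K a b)).1
    calc μ - opNorm K = μ * (‖a‖ ^ 2 + ‖b‖ ^ 2) - opNorm K * (‖a‖ ^ 2 + ‖b‖ ^ 2) := by
          rw [hab]; ring
      _ ≤ μ * ‖a‖ ^ 2 + μ * ‖b‖ ^ 2 - 2 * (opNorm K * ‖a‖ * ‖b‖) := by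
          nlinarith [two_mul_le_add_sq ‖a‖ ‖b‖, opNorm_nonneg K]
      _ ≤ ‖toEuclideanLin L (sumElim a b)‖ ^ 2 := by
          rw [hform]; linarith [hmin a, hmin b]
  rw [hσQ, abs_sub_le_iff]
  constructor <;> linarith

end BlockGap

section Localizer

variable {m : Type*}

/-- `σ_z ⊗ C + σ_x ⊗ Re M + σ_y ⊗ Im M`, writing `M = Re M + i Im M` with Hermitian parts. -/
def spectralLocalizer {α : Type*} [Star α] [Neg α] (C M : Matrix m m α) :
    Matrix (m ⊕ m) (m ⊕ m) α :=
  fromBlocks C Mᴴ M (-C)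

theorem spectralLocalizer_mul_self [Fintype m] {α : Type*} [CommRing α] [StarRing α]
    {C M : Matrix m m α} (hC : C.IsHermitian) (hM : Mᴴ * M = M * Mᴴ) :
    spectralLocalizer C M * spectralLocalizer C M =
      fromBlocks (C * C + Mᴴ * M) (M * C - C * M)ᴴ (M * C - C * M) (C * C + Mᴴ * M) := by
  rw [spectralLocalizer, fromBlocks_multiply, conjTranspose_sub, conjTranspose_mul,
    conjTranspose_mul, hC.eq, ← hM]
  congr 1 <;> noncomm_ring

theorem abs_sigmaMin_sub_sigmaMin_spectralLocalizer_sq_le [Fintype m] [DecidableEq m]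
    {C M : Matrix m m ℂ} (hC : C.IsHermitian) (hM : Mᴴ * M = M * Mᴴ) :
    |sigmaMin (C * C + Mᴴ * M) - sigmaMin (spectralLocalizer C M) ^ 2| ≤
      opNorm (C * M - M * C) := by
  have hL : (spectralLocalizer C M).IsHermitian :=
    hC.fromBlocks (conjTranspose_conjTranspose M) hC.neg
  rw [← opNorm_neg, neg_sub]
  exact abs_sigmaMin_sub_sigmaMin_sq_le_opNorm hL (spectralLocalizer_mul_self hC hM)

end Localizer

section CartesianForm

variable {m : Type*} {A B : Matrix m m ℂ}

theorem conjTranspose_add_I_smul (hA : A.IsHermitian) (hB : B.IsHermitian) :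
    (A + I • B)ᴴ = A - I • B := by
  simp [conjTranspose_add, conjTranspose_smul, hA.eq, hB.eq, sub_eq_add_neg]

variable [Fintype m]

theorem sub_I_smul_mul_add_I_smul (hAB : A * B = B * A) :
    (A - I • B) * (A + I • B) = A * A + B * B := by
  simp only [sub_mul, mul_add, smul_mul_assoc, mul_smul_comm, hAB]
  linear_combination (norm := module) I_sq • (-(B * B))

theorem add_I_smul_mul_sub_I_smul (hAB : A * B = B * A) :
    (A + I • B) * (A - I • B) = A * A + B * B := by
  simp only [add_mul, mul_sub, smul_mul_assoc, mul_smul_comm, hAB]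
  linear_combination (norm := module) I_sq • (-(B * B))

end CartesianForm

/-- with `L` the spectral localizer of `(X, Y, H)` at `(x, y, E)`
(written in block form using the Pauli matrices) and
`Q = (X−x)² + (Y−y)² + (H−E)²`, one has `|σ_min(Q) − σ_min(L)²| ≤ ‖[H, X+iY]‖`. -/
theorem quadratic_vs_clifford_gap_2d {n : ℕ}
    (X Y H : Matrix (Fin n) (Fin n) ℂ)
    (hX : X.IsHermitian) (hY : Y.IsHermitian) (hH : H.IsHermitian)
    (hXY : X * Y = Y * X) (x y E : ℝ) :
    |sigmaMin ((X - (x : ℂ) • 1) ^ 2 + (Y - (y : ℂ) • 1) ^ 2 + (H - (E : ℂ) • 1) ^ 2) -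
        (sigmaMin
          (Matrix.fromBlocks
            (H - (E : ℂ) • 1)
            ((X - I • Y) - ((x : ℂ) - I * y) • 1)
            ((X + I • Y) - ((x : ℂ) + I * y) • 1)
            (-(H - (E : ℂ) • 1)))) ^ 2| ≤
      opNorm (H * (X + I • Y) - (X + I • Y) * H) := by
  set A := X - (x : ℂ) • 1 with hA_def
  set B := Y - (y : ℂ) • 1 with hB_def
  set C := H - (E : ℂ) • 1 with hC_def
  have hA : A.IsHermitian := hX.sub (by simp [IsHermitian])
  have hB : B.IsHermitian := hY.sub (by simp [IsHermitian])
  have hC : C.IsHermitian := hH.sub (by simp [IsHermitian])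
  have hAB : A * B = B * A := by
    simp only [hA_def, hB_def, sub_mul, mul_sub, smul_mul_assoc, mul_smul_comm, one_mul, mul_one,
      hXY]
    module
  have hM : (X + I • Y) - ((x : ℂ) + I * y) • 1 = A + I • B := by module
  have hMadj : (X - I • Y) - ((x : ℂ) - I * y) • 1 = (A + I • B)ᴴ := by
    rw [conjTranspose_add_I_smul hA hB]; module
  have hQ : A ^ 2 + B ^ 2 + C ^ 2 = C * C + (A + I • B)ᴴ * (A + I • B) := by
    rw [conjTranspose_add_I_smul hA hB, sub_I_smul_mul_add_I_smul hAB, sq, sq, sq]; abel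
  have hK : H * (X + I • Y) - (X + I • Y) * H = C * (A + I • B) - (A + I • B) * C := by
    rw [← hM, hC_def]
    simp only [sub_mul, mul_sub, smul_mul_assoc, mul_smul_comm, one_mul, mul_one]
    module
  have hnormal : (A + I • B)ᴴ * (A + I • B) = (A + I • B) * (A + I • B)ᴴ := by
    rw [conjTranspose_add_I_smul hA hB, sub_I_smul_mul_add_I_smul hAB,
      add_I_smul_mul_sub_I_smul hAB]
  rw [hM, hMadj, hQ, hK]
  exact abs_sigmaMin_sub_sigmaMin_spectralLocalizer_sq_le hC hnormal
end

section
/- Assume X₁,…,X_d and H are Hermitian n×n complex matrices, that the X_j commute with each other, and that Z = √(X₁² + ⋯ + X_d²) (the positive semidefinite square root) is invertible. If H₀ is Hermitian and ‖Z⁻¹(HH₀ + H₀H + H₀²)Z⁻¹‖ ≤ C for some constant C, then in the Loewner (positive semidefinite) order, (1−C)·Q₀(X₁,…,X_d,H) ≤ Q₀(X₁,…,X_d,H+H₀) ≤ (1+C)·Q₀(X₁,…,X_d,H), where Q₀(X₁,…,X_d,H) = Σ_j X_j² + H² = Z² + H². -/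
/-!
Write `Q = Σ_j X_j² + H²`; then `Q₀(X, H + H₀) = Q + E` with `E = HH₀ + H₀H + H₀²`.
The self-adjoint matrix `Z⁻¹EZ⁻¹` has norm at most `C`, so `-C ≤ Z⁻¹EZ⁻¹ ≤ C`, and conjugating
by `Z` gives `-C Z² ≤ E ≤ C Z²`. Since `Z² ≤ Z² + H² = Q`, this yields `-C Q ≤ E ≤ C Q`.
-/

open Matrix
open scoped ComplexOrder

section CStarAlgebra

variable {A : Type*} [CStarAlgebra A] [PartialOrder A] [StarOrderedRing A]

lemma IsSelfAdjoint.star_conjugate_le_smul_of_norm_le {x : A} (hx : IsSelfAdjoint x) {C : ℝ}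
    (hC : ‖x‖ ≤ C) (c : A) : star c * x * c ≤ C • (star c * c) := by
  have hxC : x ≤ algebraMap ℝ A C :=
    hx.le_algebraMap_norm_self.trans (algebraMap_mono A hC)
  simpa [Algebra.algebraMap_eq_smul_one] using star_left_conjugate_le_conjugate hxC c

lemma IsSelfAdjoint.neg_smul_le_star_conjugate_of_norm_le {x : A} (hx : IsSelfAdjoint x) {C : ℝ}
    (hC : ‖x‖ ≤ C) (c : A) : -(C • (star c * c)) ≤ star c * x * c := by
  have := hx.neg.star_conjugate_le_smul_of_norm_le (C := C) (by rwa [norm_neg]) c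
  rwa [mul_neg, neg_mul, neg_le] at this

end CStarAlgebra

section OrderedModule

variable {M : Type*} [AddCommGroup M] [PartialOrder M] [IsOrderedAddMonoid M] [Module ℝ M]
  [PosSMulMono ℝ M] {p q e : M} {C : ℝ}

lemma one_sub_smul_le_add_of_neg_smul_le (hC : 0 ≤ C) (hpq : p ≤ q) (he : -(C • p) ≤ e) :
    (1 - C) • q ≤ q + e := by
  calc (1 - C) • q = q + -(C • q) := by rw [sub_smul, one_smul, sub_eq_add_neg]
    _ ≤ q + -(C • p) := by gcongr
    _ ≤ q + e := by gcongr

lemma add_le_one_add_smul_of_le_smul (hC : 0 ≤ C) (hpq : p ≤ q) (he : e ≤ C • p) :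
    q + e ≤ (1 + C) • q := by
  calc q + e ≤ q + C • p := by gcongr
    _ ≤ q + C • q := by gcongr
    _ = (1 + C) • q := by rw [add_smul, one_smul]

end OrderedModule

open scoped MatrixOrder

section L2Operator

open scoped Matrix.Norms.L2Operator

variable {m : Type*} [Fintype m] [DecidableEq m]

lemma Matrix.IsHermitian.mem_Icc_of_opNorm_inv_mul_mul_inv_le {Z E : Matrix m m ℂ}
    (hZ : Z.IsHermitian) (hZu : IsUnit Z) (hE : E.IsHermitian) {C : ℝ}
    (hC : opNorm (Z⁻¹ * E * Z⁻¹) ≤ C) : E ∈ Set.Icc (-(C • Z ^ 2)) (C • Z ^ 2) := by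
  have hdet : IsUnit Z.det := (isUnit_iff_isUnit_det Z).mp hZu
  have hconj : star Z * (Z⁻¹ * E * Z⁻¹) * Z = E := by
    rw [star_eq_conjTranspose, hZ.eq, ← mul_assoc Z, nonsing_inv_mul_cancel_right Z _ hdet,
      mul_nonsing_inv_cancel_left Z _ hdet]
  have hsq : star Z * Z = Z ^ 2 := by rw [star_eq_conjTranspose, hZ.eq, sq]
  have hsa : IsSelfAdjoint (Z⁻¹ * E * Z⁻¹) :=
    hE.isSelfAdjoint.conjugate_self hZ.inv.isSelfAdjoint
  constructor
  · simpa only [hconj, hsq] using hsa.neg_smul_le_star_conjugate_of_norm_le hC Z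
  · simpa only [hconj, hsq] using hsa.star_conjugate_le_smul_of_norm_le hC Z

end L2Operator

theorem quadratic_operator_truncation_loewner_general {n d : ℕ}
    (X : Fin d → Matrix (Fin n) (Fin n) ℂ)
    (H : Matrix (Fin n) (Fin n) ℂ) (hH : H.IsHermitian)
    (Z : Matrix (Fin n) (Fin n) ℂ) (hZpsd : Z.PosSemidef)
    (hZsq : Z ^ 2 = ∑ j, (X j) ^ 2) (hZinv : IsUnit Z)
    (H₀ : Matrix (Fin n) (Fin n) ℂ) (hH₀ : H₀.IsHermitian)
    (C : ℝ) (hC : opNorm (Z⁻¹ * (H * H₀ + H₀ * H + H₀ ^ 2) * Z⁻¹) ≤ C) :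
    ((∑ j, (X j) ^ 2 + (H + H₀) ^ 2) - (1 - C) • (∑ j, (X j) ^ 2 + H ^ 2)).PosSemidef ∧
      ((1 + C) • (∑ j, (X j) ^ 2 + H ^ 2) - (∑ j, (X j) ^ 2 + (H + H₀) ^ 2)).PosSemidef := by
  set E := H * H₀ + H₀ * H + H₀ ^ 2
  have hsq : (H + H₀) ^ 2 = H ^ 2 + E := by simp only [E]; noncomm_ring
  have hE : E.IsHermitian := by
    simpa only [hsq, add_sub_cancel_left] using ((hH.add hH₀).pow 2).sub (hH.pow 2)
  have hZq : Z ^ 2 ≤ ∑ j, X j ^ 2 + H ^ 2 :=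
    hZsq ▸ le_add_of_nonneg_right hH.isSelfAdjoint.sq_nonneg
  have hC₀ : 0 ≤ C := (norm_nonneg _).trans hC
  obtain ⟨hlower, hupper⟩ := hZpsd.isHermitian.mem_Icc_of_opNorm_inv_mul_mul_inv_le hZinv hE hC
  rw [hsq, ← add_assoc]
  -- under `MatrixOrder`, `A ≤ B` is by definition `(B - A).PosSemidef`
  exact ⟨one_sub_smul_le_add_of_neg_smul_le hC₀ hZq hlower,
    add_le_one_add_smul_of_le_smul hC₀ hZq hupper⟩

/-- with commuting Hermitian `X₁,…,X_d`, Hermitian `H`, `Z` the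
invertible positive semidefinite square root of `Σ_j X_j²`, and Hermitian `H₀`
satisfying `‖Z⁻¹(HH₀ + H₀H + H₀²)Z⁻¹‖ ≤ C`, the quadratic composite operators
at the origin satisfy `(1−C)·Q₀(X,H) ≤ Q₀(X,H+H₀) ≤ (1+C)·Q₀(X,H)` in the
Loewner order. -/
theorem quadratic_operator_truncation_loewner {n d : ℕ}
    (X : Fin d → Matrix (Fin n) (Fin n) ℂ) (hX : ∀ j, (X j).IsHermitian)
    (hXcomm : ∀ j k, X j * X k = X k * X j)
    (H : Matrix (Fin n) (Fin n) ℂ) (hH : H.IsHermitian)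
    (Z : Matrix (Fin n) (Fin n) ℂ) (hZpsd : Z.PosSemidef)
    (hZsq : Z ^ 2 = ∑ j, (X j) ^ 2) (hZinv : IsUnit Z)
    (H₀ : Matrix (Fin n) (Fin n) ℂ) (hH₀ : H₀.IsHermitian)
    (C : ℝ) (hC : opNorm (Z⁻¹ * (H * H₀ + H₀ * H + H₀ ^ 2) * Z⁻¹) ≤ C) :
    ((∑ j, (X j) ^ 2 + (H + H₀) ^ 2) - (1 - C) • (∑ j, (X j) ^ 2 + H ^ 2)).PosSemidef ∧
      ((1 + C) • (∑ j, (X j) ^ 2 + H ^ 2) - (∑ j, (X j) ^ 2 + (H + H₀) ^ 2)).PosSemidef :=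
  quadratic_operator_truncation_loewner_general X H hH Z hZpsd hZsq hZinv H₀ hH₀ C hC
end

section
/- Assume X₁,…,X_d and H are Hermitian n×n complex matrices, that the X_j commute with each other, and that Z = √(X₁² + ⋯ + X_d²) is invertible. If H₀ is Hermitian and ‖Z⁻¹(HH₀ + H₀H + H₀²)Z⁻¹‖ ≤ C for some constant C with 0 ≤ C < 1, then (1−C)^{1/2} · μ^Q₀(X₁,…,X_d,H) ≤ μ^Q₀(X₁,…,X_d,H+H₀) ≤ (1+C)^{1/2} · μ^Q₀(X₁,…,X_d,H). -/
open Matrix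
open scoped ComplexOrder

/-!
Write `Q = Σ_j X_j² + H²` and `E = HH₀ + H₀H + H₀²`, so that the quadratic composite operator
of `H + H₀` is `Q + E`. In the Loewner order the norm bound says `-C ≤ Z⁻¹EZ⁻¹ ≤ C`;
conjugating by `Z` gives `-C Z² ≤ E ≤ C Z²`, and `Z² = Σ_j X_j² ≤ Q`, hence
`(1 - C) Q ≤ Q + E ≤ (1 + C) Q`. The smallest eigenvalue is monotone and positively
homogeneous for the Loewner order, and taking square roots gives both bounds.
-/

section CStarAlgebra

variable {A : Type*} [CStarAlgebra A] [PartialOrder A] [StarOrderedRing A]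

lemma IsSelfAdjoint.le_algebraMap_of_norm_le {a : A} (ha : IsSelfAdjoint a) {r : ℝ}
    (h : ‖a‖ ≤ r) : a ≤ algebraMap ℝ A r :=
  ha.le_algebraMap_norm_self.trans (algebraMap_mono A h)

lemma IsSelfAdjoint.neg_algebraMap_le_of_norm_le {a : A} (ha : IsSelfAdjoint a) {r : ℝ}
    (h : ‖a‖ ≤ r) : -algebraMap ℝ A r ≤ a :=
  neg_le.mp (ha.neg.le_algebraMap_of_norm_le (by rwa [norm_neg]))

end CStarAlgebra

lemma one_sub_smul_le_add_and_add_le_one_add_smul {A : Type*} [AddCommGroup A] [PartialOrder A]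
    [IsOrderedAddMonoid A] [Module ℝ A] [PosSMulMono ℝ A] {S Q E : A} {C : ℝ} (hC : 0 ≤ C)
    (hSQ : S ≤ Q) (hlo : -(C • S) ≤ E) (hhi : E ≤ C • S) :
    (1 - C) • Q ≤ Q + E ∧ Q + E ≤ (1 + C) • Q := by
  have hCS : C • S ≤ C • Q := smul_le_smul_of_nonneg_left hSQ hC
  constructor
  · calc (1 - C) • Q = Q + -(C • Q) := by module
      _ ≤ Q + E := by gcongr; exact (neg_le_neg hCS).trans hlo
  · calc Q + E ≤ Q + C • Q := by gcongr; exact hhi.trans hCS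
      _ = (1 + C) • Q := by module

open scoped MatrixOrder Matrix.Norms.L2Operator

section Loewner

variable {m : Type*} [Fintype m] [DecidableEq m]

lemma minEig_eq_sInf_spectrum (A : Matrix m m ℂ) : minEig A = sInf (spectrum ℝ A) := by
  rw [minEig, ← spectrum.preimage_algebraMap ℂ]
  rfl

lemma le_minEig_iff [Nonempty m] {A : Matrix m m ℂ} (hA : A.IsHermitian) {c : ℝ} :
    c ≤ minEig A ↔ algebraMap ℝ _ c ≤ A := by
  rw [algebraMap_le_iff_le_spectrum (a := A) hA.isSelfAdjoint, minEig_eq_sInf_spectrum]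
  exact le_csInf_iff (ContinuousFunctionalCalculus.isCompact_spectrum A).bddBelow
    (ContinuousFunctionalCalculus.spectrum_nonempty A hA.isSelfAdjoint)

lemma mul_minEig_le_minEig [Nonempty m] {A B : Matrix m m ℂ} (hA : A.IsHermitian)
    (hB : B.IsHermitian) {t : ℝ} (ht : 0 ≤ t) (h : t • A ≤ B) : t * minEig A ≤ minEig B := by
  rw [le_minEig_iff hB, map_mul, ← Algebra.smul_def]
  exact (smul_le_smul_of_nonneg_left ((le_minEig_iff hA).mp le_rfl) ht).trans h

lemma minEig_le_mul_minEig [Nonempty m] {A B : Matrix m m ℂ} (hA : A.IsHermitian)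
    (hB : B.IsHermitian) {t : ℝ} (ht : 0 < t) (h : B ≤ t • A) : minEig B ≤ t * minEig A := by
  have := mul_minEig_le_minEig hB hA (inv_nonneg.mpr ht.le) ((inv_smul_le_iff_of_pos ht).mpr h)
  rwa [inv_mul_le_iff₀ ht] at this

lemma neg_smul_sq_le_and_le_smul_sq_of_opNorm_le {Z E : Matrix m m ℂ} (hZ : Z.IsHermitian)
    (hZu : IsUnit Z) (hE : E.IsHermitian) {C : ℝ} (h : opNorm (Z⁻¹ * E * Z⁻¹) ≤ C) :
    -(C • Z ^ 2) ≤ E ∧ E ≤ C • Z ^ 2 := by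
  rw [opNorm, ← cstar_norm_def] at h
  have hM : IsSelfAdjoint (Z⁻¹ * E * Z⁻¹) := by
    simpa only [hZ.inv.eq] using (isHermitian_conjTranspose_mul_mul Z⁻¹ hE).isSelfAdjoint
  have hdet := (isUnit_iff_isUnit_det Z).mp hZu
  have hconj_M : Z * (Z⁻¹ * E * Z⁻¹) * Z = E := by
    rw [← mul_assoc, ← mul_assoc, mul_nonsing_inv Z hdet, one_mul, mul_assoc,
      nonsing_inv_mul Z hdet, mul_one]
  have hconj_C : Z * algebraMap ℝ _ C * Z = C • Z ^ 2 := by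
    rw [Algebra.algebraMap_eq_smul_one, mul_smul_comm, mul_one, smul_mul_assoc, sq]
  constructor
  · simpa only [mul_neg, neg_mul, hconj_M, hconj_C] using
      hZ.isSelfAdjoint.conjugate_le_conjugate (hM.neg_algebraMap_le_of_norm_le h)
  · simpa only [hconj_M, hconj_C] using
      hZ.isSelfAdjoint.conjugate_le_conjugate (hM.le_algebraMap_of_norm_le h)

end Loewner

theorem quadratic_gap_truncation_bound_general {n d : ℕ} (hn : 0 < n)
    (X : Fin d → Matrix (Fin n) (Fin n) ℂ)
    (H : Matrix (Fin n) (Fin n) ℂ) (hH : H.IsHermitian)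
    (Z : Matrix (Fin n) (Fin n) ℂ) (hZpsd : Z.PosSemidef)
    (hZsq : Z ^ 2 = ∑ j, (X j) ^ 2) (hZinv : IsUnit Z)
    (H₀ : Matrix (Fin n) (Fin n) ℂ) (hH₀ : H₀.IsHermitian)
    (C : ℝ) (hC0 : 0 ≤ C) (hC1 : C < 1)
    (hC : opNorm (Z⁻¹ * (H * H₀ + H₀ * H + H₀ ^ 2) * Z⁻¹) ≤ C) :
    Real.sqrt (1 - C) * Real.sqrt (minEig (∑ j, (X j) ^ 2 + H ^ 2)) ≤
        Real.sqrt (minEig (∑ j, (X j) ^ 2 + (H + H₀) ^ 2)) ∧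
      Real.sqrt (minEig (∑ j, (X j) ^ 2 + (H + H₀) ^ 2)) ≤
        Real.sqrt (1 + C) * Real.sqrt (minEig (∑ j, (X j) ^ 2 + H ^ 2)) := by
  have : Nonempty (Fin n) := ⟨⟨0, hn⟩⟩
  have hQE : ∑ j, X j ^ 2 + (H + H₀) ^ 2 =
      (∑ j, X j ^ 2 + H ^ 2) + (H * H₀ + H₀ * H + H₀ ^ 2) := by noncomm_ring
  have hE : (H * H₀ + H₀ * H + H₀ ^ 2).IsHermitian := by
    have hE' : H * H₀ + H₀ * H + H₀ ^ 2 = (H + H₀) ^ 2 - H ^ 2 := by noncomm_ring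
    exact hE' ▸ ((hH.add hH₀).pow 2).sub (hH.pow 2)
  set Q := ∑ j, X j ^ 2 + H ^ 2
  set E := H * H₀ + H₀ * H + H₀ ^ 2
  have hQ : Q.IsHermitian := (hZsq ▸ hZpsd.isHermitian.pow 2).add (hH.pow 2)
  obtain ⟨hlo, hhi⟩ := neg_smul_sq_le_and_le_smul_sq_of_opNorm_le hZpsd.isHermitian hZinv hE hC
  rw [hZsq] at hlo hhi
  obtain ⟨hlower, hupper⟩ := one_sub_smul_le_add_and_add_le_one_add_smul hC0
    (le_add_of_nonneg_right hH.isSelfAdjoint.sq_nonneg) hlo hhi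
  rw [hQE, ← Real.sqrt_mul (by linarith), ← Real.sqrt_mul (by linarith)]
  exact ⟨Real.sqrt_le_sqrt (mul_minEig_le_minEig hQ (hQ.add hE) (by linarith) hlower),
    Real.sqrt_le_sqrt (minEig_le_mul_minEig hQ (hQ.add hE) (by linarith) hupper)⟩

/-- with commuting Hermitian `X₁,…,X_d`, Hermitian `H`, `Z` the
invertible positive semidefinite square root of `Σ_j X_j²`, and Hermitian `H₀`
satisfying `‖Z⁻¹(HH₀ + H₀H + H₀²)Z⁻¹‖ ≤ C < 1`, the quadratic gaps at the
origin satisfy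
`(1−C)^{1/2} μ^Q₀(X,H) ≤ μ^Q₀(X,H+H₀) ≤ (1+C)^{1/2} μ^Q₀(X,H)`. -/
theorem quadratic_gap_truncation_bound {n d : ℕ} (hn : 0 < n)
    (X : Fin d → Matrix (Fin n) (Fin n) ℂ) (hX : ∀ j, (X j).IsHermitian)
    (hXcomm : ∀ j k, X j * X k = X k * X j)
    (H : Matrix (Fin n) (Fin n) ℂ) (hH : H.IsHermitian)
    (Z : Matrix (Fin n) (Fin n) ℂ) (hZpsd : Z.PosSemidef)
    (hZsq : Z ^ 2 = ∑ j, (X j) ^ 2) (hZinv : IsUnit Z)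
    (H₀ : Matrix (Fin n) (Fin n) ℂ) (hH₀ : H₀.IsHermitian)
    (C : ℝ) (hC0 : 0 ≤ C) (hC1 : C < 1)
    (hC : opNorm (Z⁻¹ * (H * H₀ + H₀ * H + H₀ ^ 2) * Z⁻¹) ≤ C) :
    Real.sqrt (1 - C) * Real.sqrt (minEig (∑ j, (X j) ^ 2 + H ^ 2)) ≤
        Real.sqrt (minEig (∑ j, (X j) ^ 2 + (H + H₀) ^ 2)) ∧
      Real.sqrt (minEig (∑ j, (X j) ^ 2 + (H + H₀) ^ 2)) ≤
        Real.sqrt (1 + C) * Real.sqrt (minEig (∑ j, (X j) ^ 2 + H ^ 2)) :=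
  quadratic_gap_truncation_bound_general hn X H hH Z hZpsd hZsq hZinv H₀ hH₀ C hC0 hC1 hC
end

section
/- Assume X₁,…,X_d are real diagonal n×n matrices with diagonal entries x_{j,i}, H is a Hermitian n×n complex matrix, and set z_i = √(Σ_{j=1}^d x_{j,i}²). Let ρ > 0 and let s = {i : z_i ≤ ρ}, assumed nonempty; let X_j^ρ and H^ρ denote the principal submatrices of X_j and H indexed by s. If H acts trivially on the complement of s (i.e., H_{ik} = 0 whenever i ∉ s or k ∉ s), then min(ρ, μ^Q₀(X₁,…,X_d,H)) = min(ρ, μ^Q₀(X₁^ρ,…,X_d^ρ,H^ρ)). -/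
open Matrix

lemma spec_hermitian {m : Type*} [Fintype m] [DecidableEq m] {M : Matrix m m ℂ}
    (hM : M.IsHermitian) :
    spectrum ℂ M = Set.range (fun i => (hM.eigenvalues i : ℂ)) := by
  have h1 : (hM.eigenvectorUnitary : Matrix m m ℂ) * star (hM.eigenvectorUnitary : Matrix m m ℂ) = 1 :=
    mem_unitaryGroup_iff.mp hM.eigenvectorUnitary.2
  have h2 : star (hM.eigenvectorUnitary : Matrix m m ℂ) * (hM.eigenvectorUnitary : Matrix m m ℂ) = 1 :=
    mem_unitaryGroup_iff'.mp hM.eigenvectorUnitary.2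
  set u : (Matrix m m ℂ)ˣ := ⟨_, _, h1, h2⟩ with hu
  have hM' : M = (u : Matrix m m ℂ) * (diagonal (RCLike.ofReal ∘ hM.eigenvalues)) *
      ((u⁻¹ : (Matrix m m ℂ)ˣ) : Matrix m m ℂ) :=
    hM.spectral_theorem
  conv_lhs => rw [hM']
  rw [spectrum.units_conjugate, spectrum_diagonal]
  ext c
  simp [Function.comp, RCLike.ofReal]

lemma realSpec_hermitian {m : Type*} [Fintype m] [DecidableEq m] {M : Matrix m m ℂ}
    (hM : M.IsHermitian) :
    {c : ℝ | (c : ℂ) ∈ spectrum ℂ M} = Set.range hM.eigenvalues := by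
  rw [spec_hermitian hM]
  ext c
  simp [Complex.ofReal_inj, eq_comm]

lemma spectrum_fromBlocks_diag {α β : Type*} [Fintype α] [DecidableEq α] [Fintype β]
    [DecidableEq β] (B : Matrix α α ℂ) (C : Matrix β β ℂ) :
    spectrum ℂ (fromBlocks B 0 0 C) = spectrum ℂ B ∪ spectrum ℂ C := by
  ext c
  simp only [Set.mem_union, spectrum.mem_iff, Matrix.isUnit_iff_isUnit_det, isUnit_iff_ne_zero]
  have key : (algebraMap ℂ (Matrix (α ⊕ β) (α ⊕ β) ℂ)) c - fromBlocks B 0 0 C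
      = fromBlocks ((algebraMap ℂ (Matrix α α ℂ)) c - B) 0 0
          ((algebraMap ℂ (Matrix β β ℂ)) c - C) := by
    ext (i | i) (k | k) <;>
      simp [Matrix.algebraMap_matrix_apply, Matrix.fromBlocks, Matrix.sub_apply]
  rw [key, det_fromBlocks_zero₂₁, mul_ne_zero_iff]
  tauto

lemma aux_trunc {n : ℕ} (p : Fin n → Prop) [DecidablePred p]
    (A : Matrix (Fin n) (Fin n) ℂ)
    (A' : Matrix {i // p i} {i // p i} ℂ) (hA' : A'.IsHermitian)
    (w : {i // ¬ p i} → ℝ)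
    (hblock : A.submatrix (Equiv.sumCompl p) (Equiv.sumCompl p)
      = fromBlocks A' 0 0 (diagonal (fun i => (w i : ℂ))))
    (ρ : ℝ) (hρ : 0 < ρ) (hw : ∀ i, ρ ^ 2 ≤ w i)
    (hne : Nonempty {i // p i}) :
    min ρ (Real.sqrt (minEig A)) = min ρ (Real.sqrt (minEig A')) := by
  have hspec : spectrum ℂ A = spectrum ℂ A' ∪ Set.range (fun i => (w i : ℂ)) := by
    have h1 : spectrum ℂ (Matrix.reindexAlgEquiv ℂ ℂ (Equiv.sumCompl p).symm A)
        = spectrum ℂ A := AlgEquiv.spectrum_eq _ _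
    rw [← h1]
    have h2 : (Matrix.reindexAlgEquiv ℂ ℂ (Equiv.sumCompl p).symm A)
        = fromBlocks A' 0 0 (diagonal (fun i => (w i : ℂ))) := by
      rw [Matrix.reindexAlgEquiv_apply, Matrix.reindex_apply, Equiv.symm_symm, hblock]
    rw [h2, spectrum_fromBlocks_diag, spectrum_diagonal]
  have hreal : {c : ℝ | (c : ℂ) ∈ spectrum ℂ A}
      = Set.range hA'.eigenvalues ∪ Set.range w := by
    rw [← realSpec_hermitian hA']
    ext c
    simp only [Set.mem_setOf_eq, hspec, Set.mem_union, Set.mem_range, Complex.ofReal_inj,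
      eq_comm (a := (c : ℂ))]
  unfold minEig
  rw [hreal, realSpec_hermitian hA']
  rcases isEmpty_or_nonempty {i // ¬ p i} with he | he
  · rw [Set.range_eq_empty w, Set.union_empty]
  · rw [csInf_union ((Set.finite_range _).bddBelow) (Set.range_nonempty _)
      ((Set.finite_range _).bddBelow) (Set.range_nonempty _)]
    have h0 : ρ ^ 2 ≤ sInf (Set.range w) :=
      le_csInf (Set.range_nonempty _) (by rintro t ⟨i, rfl⟩; exact hw i)
    have hm2 : ρ ≤ Real.sqrt (sInf (Set.range w)) := by
      rw [Real.le_sqrt hρ.le (le_trans (by positivity) h0)]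
      exact h0
    have hmin : Real.sqrt (min (sInf (Set.range hA'.eigenvalues)) (sInf (Set.range w)))
        = min (Real.sqrt (sInf (Set.range hA'.eigenvalues))) (Real.sqrt (sInf (Set.range w))) :=
      Monotone.map_min (fun a b h => Real.sqrt_le_sqrt h)
    rw [hmin, min_comm (Real.sqrt (sInf (Set.range hA'.eigenvalues))), ← min_assoc,
      min_eq_left hm2]

lemma isHermitian_sum' {m ι : Type*} [Fintype m] [DecidableEq m] [Fintype ι]
    (f : ι → Matrix m m ℂ) (hf : ∀ j, (f j).IsHermitian) : (∑ j, f j).IsHermitian := by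
  have h : (∑ j, f j)ᴴ = ∑ j, f j := by
    rw [Matrix.conjTranspose_sum]
    exact Finset.sum_congr rfl fun j _ => hf j
  exact h

/-- let `X₁,…,X_d` be real diagonal matrices with entries `x_{j,i}`,
set `z_i = √(Σ_j x_{j,i}²)`, and let `s = {i : z_i ≤ ρ}` (assumed nonempty).  If the
Hermitian matrix `H` vanishes on rows and columns outside `s`, then
`min(ρ, μ^Q₀(X₁,…,X_d,H)) = min(ρ, μ^Q₀(X₁^ρ,…,X_d^ρ,H^ρ))`, where the superscript
`ρ` denotes the principal submatrix indexed by `s`. -/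
theorem quadratic_gap_truncation {n d : ℕ} (hn : 0 < n)
    (x : Fin d → Fin n → ℝ)
    (H : Matrix (Fin n) (Fin n) ℂ) (hH : H.IsHermitian)
    (ρ : ℝ) (hρ : 0 < ρ)
    (hne : ∃ i : Fin n, Real.sqrt (∑ j, x j i ^ 2) ≤ ρ)
    (htriv : ∀ i k : Fin n,
      (¬ Real.sqrt (∑ j, x j i ^ 2) ≤ ρ ∨ ¬ Real.sqrt (∑ j, x j k ^ 2) ≤ ρ) → H i k = 0) :
    min ρ (Real.sqrt (minEig
        (∑ j, (Matrix.diagonal fun i => (x j i : ℂ)) ^ 2 + H ^ 2))) =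
      min ρ (Real.sqrt (minEig
        (∑ j, (Matrix.diagonal
            fun i : {i : Fin n // Real.sqrt (∑ j, x j i ^ 2) ≤ ρ} => (x j i.1 : ℂ)) ^ 2 +
          (H.submatrix (Subtype.val : {i : Fin n // Real.sqrt (∑ j, x j i ^ 2) ≤ ρ} → Fin n)
            Subtype.val) ^ 2))) := by
  set p : Fin n → Prop := fun i => Real.sqrt (∑ j, x j i ^ 2) ≤ ρ with hp
  set A : Matrix (Fin n) (Fin n) ℂ :=
    ∑ j, (Matrix.diagonal fun i => (x j i : ℂ)) ^ 2 + H ^ 2 with hA_def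
  set A' : Matrix {i // p i} {i // p i} ℂ :=
    ∑ j, (Matrix.diagonal fun i : {i // p i} => (x j i.1 : ℂ)) ^ 2 +
      (H.submatrix (Subtype.val : {i // p i} → Fin n) Subtype.val) ^ 2 with hA'_def
  have hHrow : ∀ i k : Fin n, ¬ p i → H i k = 0 := fun i k hi => htriv i k (Or.inl hi)
  have hHcol : ∀ i k : Fin n, ¬ p k → H i k = 0 := fun i k hk => htriv i k (Or.inr hk)
  have hdiagSA : ∀ (m : Type) (v : m → ℝ), IsSelfAdjoint (fun i => (v i : ℂ)) := by
    intro m v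
    funext i
    exact Complex.conj_ofReal _
  have hA' : A'.IsHermitian := by
    rw [hA'_def]
    exact (isHermitian_sum' _ fun j =>
      (isHermitian_diagonal_of_self_adjoint _ (hdiagSA _ _)).pow 2).add
      ((hH.submatrix _).pow 2)
  -- entrywise formulas
  have hAapp : ∀ i k : Fin n, A i k
      = (if i = k then ∑ j, (x j i : ℂ) ^ 2 else 0) + ∑ m, H i m * H m k := by
    intro i k
    rw [hA_def]
    by_cases h : i = k
    · subst h
      simp [Matrix.sum_apply, Matrix.add_apply, Matrix.diagonal_pow, pow_two,
        Matrix.mul_apply, Matrix.diagonal_apply, Pi.pow_apply]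
    · simp [Matrix.sum_apply, Matrix.add_apply, Matrix.diagonal_pow, pow_two,
        Matrix.mul_apply, Matrix.diagonal_apply, Pi.pow_apply, h]
  have hA'app : ∀ i k : {i // p i}, A' i k
      = (if i = k then ∑ j, (x j i.1 : ℂ) ^ 2 else 0)
          + ∑ m : {i // p i}, H i.1 m.1 * H m.1 k.1 := by
    intro i k
    rw [hA'_def]
    by_cases h : i = k
    · subst h
      simp [Matrix.sum_apply, Matrix.add_apply, Matrix.diagonal_pow, pow_two,
        Matrix.mul_apply, Matrix.diagonal_apply, Pi.pow_apply, Matrix.submatrix_apply]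
    · simp [Matrix.sum_apply, Matrix.add_apply, Matrix.diagonal_pow, pow_two,
        Matrix.mul_apply, Matrix.diagonal_apply, Pi.pow_apply, Matrix.submatrix_apply, h]
  have hblock : A.submatrix (Equiv.sumCompl p) (Equiv.sumCompl p)
      = fromBlocks A' 0 0
          (diagonal fun i : {i // ¬ p i} => ((∑ j, x j i.1 ^ 2 : ℝ) : ℂ)) := by
    ext (i | i) (k | k)
    · -- inl inl
      show A i.1 k.1 = A' i k
      rw [hAapp, hA'app]
      congr 1
      · rcases eq_or_ne i k with rfl | hik
        · simp
        · rw [if_neg (fun h => hik (Subtype.ext h)), if_neg hik]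
      · rw [← Fintype.sum_subtype_add_sum_subtype p (fun m => H i.1 m * H m k.1)]
        have hz : ∑ m : {i // ¬ p i}, H i.1 m.1 * H m.1 k.1 = 0 :=
          Finset.sum_eq_zero fun m _ => by rw [hHrow m.1 k.1 m.2, mul_zero]
        rw [hz, add_zero]
    · -- inl inr
      show A i.1 k.1 = 0
      rw [hAapp, if_neg (fun h : i.1 = k.1 => k.2 (h ▸ i.2)),
        Finset.sum_eq_zero fun (m : Fin n) _ => by rw [hHcol m k.1 k.2, mul_zero], add_zero]
    · -- inr inl
      show A i.1 k.1 = 0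
      rw [hAapp, if_neg (fun h : i.1 = k.1 => i.2 (show p i.1 by rw [h]; exact k.2)),
        Finset.sum_eq_zero fun (m : Fin n) _ => by rw [hHrow i.1 m i.2, zero_mul], add_zero]
    · -- inr inr
      show A i.1 k.1
          = diagonal (fun i : {i // ¬ p i} => ((∑ j, x j i.1 ^ 2 : ℝ) : ℂ)) i k
      rw [hAapp,
        Finset.sum_eq_zero fun (m : Fin n) _ => by rw [hHrow i.1 m i.2, zero_mul], add_zero]
      rcases eq_or_ne i k with rfl | hik
      · rw [Matrix.diagonal_apply_eq, if_pos rfl]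
        push_cast
        rfl
      · rw [Matrix.diagonal_apply_ne _ hik, if_neg (fun h => hik (Subtype.ext h))]
  have hw : ∀ i : {i // ¬ p i}, ρ ^ 2 ≤ ∑ j, x j i.1 ^ 2 := by
    intro i
    have ht : (0:ℝ) ≤ ∑ j, x j i.1 ^ 2 := by positivity
    exact (Real.le_sqrt hρ.le ht).mp (le_of_lt (lt_of_not_ge i.2))
  obtain ⟨i0, hi0⟩ := hne
  exact aux_trunc p A A' hA' (fun i => ∑ j, x j i.1 ^ 2) hblock ρ hρ hw ⟨⟨i0, hi0⟩⟩
end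

section
/- For the Pauli matrices σ_x = [[0,1],[1,0]] and σ_y = [[0,−i],[i,0]] and any (x,y) ∈ ℝ², the smallest eigenvalue of the positive semidefinite 2×2 matrix (σ_x − xI)² + (σ_y − yI)² equals x² + y² + 2 − 2√(x² + y²). Consequently the quadratic gap satisfies μ^Q_{(x,y)}(σ_x, σ_y) = √(x² + y² + 2 − 2√(x² + y²)), whose minimum value 1 is attained exactly on the unit circle x² + y² = 1. -/
open Matrix Complex

/-- for the Pauli matrices `σ_x, σ_y` and any `(x,y) ∈ ℝ²`, the
smallest eigenvalue of `(σ_x − xI)² + (σ_y − yI)²` equals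
`x² + y² + 2 − 2√(x²+y²)`.  Consequently the quadratic gap
`μ^Q_{(x,y)}(σ_x,σ_y) = √(x²+y²+2−2√(x²+y²))` is always at least `1`, with
equality exactly on the unit circle `x² + y² = 1`. -/
theorem quadratic_gap_pauli :
    ∀ x y : ℝ,
      (minEig
          ((!![0, 1; 1, 0] - (x : ℂ) • (1 : Matrix (Fin 2) (Fin 2) ℂ)) ^ 2 +
            (!![0, -I; I, 0] - (y : ℂ) • (1 : Matrix (Fin 2) (Fin 2) ℂ)) ^ 2) =
        x ^ 2 + y ^ 2 + 2 - 2 * Real.sqrt (x ^ 2 + y ^ 2)) ∧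
      1 ≤ Real.sqrt (x ^ 2 + y ^ 2 + 2 - 2 * Real.sqrt (x ^ 2 + y ^ 2)) ∧
      (Real.sqrt (x ^ 2 + y ^ 2 + 2 - 2 * Real.sqrt (x ^ 2 + y ^ 2)) = 1 ↔
        x ^ 2 + y ^ 2 = 1) := by
  intro x y
  set r := Real.sqrt (x ^ 2 + y ^ 2) with hrdef
  have hr0 : 0 ≤ r := Real.sqrt_nonneg _
  have hr2 : r ^ 2 = x ^ 2 + y ^ 2 := Real.sq_sqrt (by positivity)
  have hE1 : (1 : ℝ) ≤ x ^ 2 + y ^ 2 + 2 - 2 * r := by nlinarith [sq_nonneg (r - 1)]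
  refine ⟨?_, ?_, ?_⟩
  · -- the eigenvalue computation
    have hM : (!![0, 1; 1, 0] - (x : ℂ) • (1 : Matrix (Fin 2) (Fin 2) ℂ)) ^ 2 +
        (!![0, -I; I, 0] - (y : ℂ) • (1 : Matrix (Fin 2) (Fin 2) ℂ)) ^ 2 =
        !![(x:ℂ)^2+y^2+2, -2*x+2*y*I; -2*x-2*y*I, (x:ℂ)^2+y^2+2] := by
      ext i j
      fin_cases i <;> fin_cases j <;>
        simp [pow_two, Matrix.mul_apply, Fin.sum_univ_two, Matrix.one_apply] <;> ring
    have hr2' : (r : ℂ) ^ 2 = (x : ℂ) ^ 2 + (y : ℂ) ^ 2 := by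
      exact_mod_cast congrArg (Complex.ofReal ·) hr2
    have hspec : ∀ c : ℝ, ((c : ℂ) ∈ spectrum ℂ
        (!![(x:ℂ)^2+y^2+2, -2*x+2*y*I; -2*x-2*y*I, (x:ℂ)^2+y^2+2]) ↔
        c = x ^ 2 + y ^ 2 + 2 - 2 * r ∨ c = x ^ 2 + y ^ 2 + 2 + 2 * r) := by
      intro c
      rw [spectrum.mem_iff, Matrix.isUnit_iff_isUnit_det, isUnit_iff_ne_zero, not_ne_iff]
      have hsub : (algebraMap ℂ (Matrix (Fin 2) (Fin 2) ℂ)) c -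
          !![(x:ℂ)^2+y^2+2, -2*x+2*y*I; -2*x-2*y*I, (x:ℂ)^2+y^2+2] =
          !![(c:ℂ)-((x:ℂ)^2+y^2+2), -(-2*x+2*y*I); -(-2*x-2*y*I), (c:ℂ)-((x:ℂ)^2+y^2+2)] := by
        rw [Algebra.algebraMap_eq_smul_one]
        ext i j
        fin_cases i <;> fin_cases j <;> simp [Matrix.one_apply]
      rw [hsub, Matrix.det_fin_two_of]
      have hfac : ((c:ℂ)-((x:ℂ)^2+y^2+2)) * ((c:ℂ)-((x:ℂ)^2+y^2+2)) -
          (-(-2*(x:ℂ)+2*y*I)) * (-(-2*(x:ℂ)-2*y*I)) =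
          ((c : ℂ) - ((x ^ 2 + y ^ 2 + 2 - 2 * r : ℝ) : ℂ)) *
            ((c : ℂ) - ((x ^ 2 + y ^ 2 + 2 + 2 * r : ℝ) : ℂ)) := by
        push_cast
        linear_combination 4 * hr2' + 4 * (y:ℂ)^2 * Complex.I_sq
      rw [hfac, mul_eq_zero, sub_eq_zero, sub_eq_zero]
      exact_mod_cast Iff.rfl
    have hset : {c : ℝ | (c : ℂ) ∈ spectrum ℂ
        (!![(x:ℂ)^2+y^2+2, -2*x+2*y*I; -2*x-2*y*I, (x:ℂ)^2+y^2+2])} =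
        {x ^ 2 + y ^ 2 + 2 - 2 * r, x ^ 2 + y ^ 2 + 2 + 2 * r} := by
      ext c; simpa using hspec c
    rw [minEig, hM, hset, csInf_pair]
    exact min_eq_left (by linarith)
  · calc (1 : ℝ) = Real.sqrt 1 := Real.sqrt_one.symm
      _ ≤ _ := Real.sqrt_le_sqrt hE1
  · rw [show (1 : ℝ) = Real.sqrt 1 from Real.sqrt_one.symm,
      Real.sqrt_inj (by linarith) (by norm_num), Real.sqrt_one]
    constructor
    · intro h; nlinarith [sq_nonneg (r - 1), sq_nonneg (r + 1)]
    · intro h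
      have : r = 1 := by nlinarith [sq_nonneg (r - 1), sq_nonneg (r + 1)]
      rw [this]; linarith
end

section
/- Let X and H be Hermitian n×n complex matrices and let Γ be a Hermitian unitary n×n matrix (Γ² = I) such that ΓH = −HΓ and ΓX = XΓ. Then the matrix B = (X + iH)Γ is Hermitian, and the spectrum of the 2n×2n Hermitian block matrix L = [[0, X − iH], [X + iH, 0]] equals σ(B) ∪ (−σ(B)); that is, a real number α is an eigenvalue of L if and only if α or −α is an eigenvalue of B. -/
open Matrix Complex


lemma fromBlocks_congr' {l m o p γ : Type*} {A A' : Matrix l m γ} {B B' : Matrix l p γ}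
    {C C' : Matrix o m γ} {D D' : Matrix o p γ} (hA : A = A') (hB : B = B') (hC : C = C')
    (hD : D = D') : Matrix.fromBlocks A B C D = Matrix.fromBlocks A' B' C' D' := by
  rw [hA, hB, hC, hD]

lemma mem_spectrum_iff_det' {m : Type*} [Fintype m] [DecidableEq m] (N : Matrix m m ℂ) (β : ℂ) :
    β ∈ spectrum ℂ N ↔ (β • (1 : Matrix m m ℂ) - N).det = 0 := by
  rw [spectrum.mem_iff, Matrix.isUnit_iff_isUnit_det, isUnit_iff_ne_zero, not_not,
    Algebra.algebraMap_eq_smul_one]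

/-- if `X, H` are Hermitian, `Γ` is a Hermitian unitary (`Γ² = I`)
commuting with `X` and anticommuting with `H`, then `B = (X + iH)Γ` is Hermitian
and the spectrum of the localizer `L = [[0, X − iH],[X + iH, 0]]` is
`σ(B) ∪ (−σ(B))`: a real `α` is an eigenvalue of `L` iff `α` or `−α` is an
eigenvalue of `B`. -/
theorem localizer_spectrum_eq_reduced_localizer {n : ℕ}
    (X H Γ : Matrix (Fin n) (Fin n) ℂ)
    (hX : X.IsHermitian) (hH : H.IsHermitian) (hΓ : Γ.IsHermitian)
    (hΓsq : Γ * Γ = 1)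
    (hΓH : Γ * H = -(H * Γ)) (hΓX : Γ * X = X * Γ) :
    ((X + I • H) * Γ).IsHermitian ∧
      ∀ α : ℝ,
        ((α : ℂ) ∈ spectrum ℂ (Matrix.fromBlocks 0 (X - I • H) (X + I • H) 0) ↔
          ((α : ℂ) ∈ spectrum ℂ ((X + I • H) * Γ) ∨
            (-α : ℂ) ∈ spectrum ℂ ((X + I • H) * Γ))) := by
  have hkey : Γ * (X - I • H) = (X + I • H) * Γ := by
    rw [mul_sub, mul_smul_comm, hΓH, hΓX, add_mul, smul_mul_assoc, smul_neg, sub_neg_eq_add]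
  have hB : ((X + I • H) * Γ).IsHermitian := by
    have h1 : ((X + I • H) * Γ)ᴴ = Γ * (X - I • H) := by
      rw [conjTranspose_mul, conjTranspose_add, conjTranspose_smul, hX.eq, hH.eq, hΓ.eq,
        Complex.star_def, Complex.conj_I, neg_smul, ← sub_eq_add_neg]
    exact (h1.trans hkey)
  refine ⟨hB, fun α => ?_⟩
  set B := (X + I • H) * Γ with hBdef
  set L := fromBlocks 0 (X - I • H) (X + I • H) (0 : Matrix (Fin n) (Fin n) ℂ) with hL
  set A : Matrix (Fin n) (Fin n) ℂ := (α : ℂ) • 1 with hA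
  set S : Matrix (Fin n ⊕ Fin n) (Fin n ⊕ Fin n) ℂ := fromBlocks Γ 0 0 1 with hS
  set T : Matrix (Fin n ⊕ Fin n) (Fin n ⊕ Fin n) ℂ := fromBlocks 1 1 1 (-1) with hT
  have hone : (1 : Matrix (Fin n ⊕ Fin n) (Fin n ⊕ Fin n) ℂ) = fromBlocks 1 0 0 1 :=
    (fromBlocks_one).symm
  have hM : S * ((α : ℂ) • (1 : Matrix (Fin n ⊕ Fin n) (Fin n ⊕ Fin n) ℂ) - L) * S
      = fromBlocks A (-B) (-B) A := by
    rw [hone, hS, hL, fromBlocks_smul, sub_eq_add_neg, fromBlocks_neg, fromBlocks_add,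
      fromBlocks_multiply, fromBlocks_multiply]
    simp only [Matrix.mul_one, Matrix.one_mul, Matrix.mul_zero, Matrix.zero_mul,
      Matrix.smul_mul, Matrix.mul_smul, add_zero, zero_add, neg_zero, smul_zero]
    refine fromBlocks_congr' ?_ ?_ ?_ ?_
    · rw [hA, hΓsq]
    · rw [Matrix.mul_neg, hkey, hBdef]
    · rw [Matrix.neg_mul, hBdef]
    · rw [hA]
  have hTM : T * fromBlocks A (-B) (-B) A * T
      = fromBlocks ((2:ℂ) • (A - B)) 0 0 ((2:ℂ) • (A + B)) := by
    rw [hT, fromBlocks_multiply, fromBlocks_multiply]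
    simp only [Matrix.one_mul, Matrix.mul_one, Matrix.neg_mul, Matrix.mul_neg, Matrix.neg_mul,
      neg_neg]
    refine fromBlocks_congr' ?_ ?_ ?_ ?_
    all_goals
      ext i j
      simp only [Matrix.add_apply, Matrix.neg_apply, Matrix.smul_apply, Matrix.sub_apply,
        Matrix.zero_apply, smul_eq_mul]
      ring
  have detS : det S * det S = 1 := by
    rw [← det_mul, hS, fromBlocks_multiply]
    simp [hΓsq, ← hone]
  have hTT : T * T = (2:ℂ) • (1 : Matrix (Fin n ⊕ Fin n) (Fin n ⊕ Fin n) ℂ) := by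
    rw [hT, fromBlocks_multiply, two_smul, hone, fromBlocks_add]
    simp
  have detT : det T * det T = (2:ℂ) ^ n * (2:ℂ) ^ n := by
    rw [← det_mul, hTT, det_smul, det_one, mul_one]
    rw [Fintype.card_sum, Fintype.card_fin, pow_add]
  have hdetmid : det (fromBlocks A (-B) (-B) A)
      = det ((α : ℂ) • (1 : Matrix (Fin n ⊕ Fin n) (Fin n ⊕ Fin n) ℂ) - L) := by
    rw [← hM, det_mul, det_mul]
    calc det S * det ((α : ℂ) • 1 - L) * det S
        = det S * det S * det ((α : ℂ) • 1 - L) := by ring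
      _ = det ((α : ℂ) • 1 - L) := by rw [detS, one_mul]
  have key : det ((α : ℂ) • (1 : Matrix (Fin n ⊕ Fin n) (Fin n ⊕ Fin n) ℂ) - L)
      = det (A - B) * det (A + B) := by
    have h1 : det (T * fromBlocks A (-B) (-B) A * T)
        = det T * det T * det (fromBlocks A (-B) (-B) A) := by
      rw [det_mul, det_mul]; ring
    have h2 : det (fromBlocks ((2:ℂ) • (A - B)) 0 0 ((2:ℂ) • (A + B)))
        = ((2:ℂ) ^ n * (2:ℂ) ^ n) * (det (A - B) * det (A + B)) := by
      rw [det_fromBlocks_zero₂₁, det_smul, det_smul, Fintype.card_fin]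
      ring
    have h3 := hTM
    apply_fun det at h3
    rw [h1, h2, detT, hdetmid] at h3
    exact mul_left_cancel₀ (mul_ne_zero (pow_ne_zero _ two_ne_zero) (pow_ne_zero _ two_ne_zero)) h3
  have hneg : (-(α:ℂ)) • (1 : Matrix (Fin n) (Fin n) ℂ) - B = -(A + B) := by
    rw [neg_smul, hA, neg_add, sub_eq_add_neg]
  have hnegdet : det ((-(α:ℂ)) • (1 : Matrix (Fin n) (Fin n) ℂ) - B) = 0 ↔ det (A + B) = 0 := by
    rw [hneg, det_neg, mul_eq_zero, Fintype.card_fin]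
    simp [pow_ne_zero]
  rw [mem_spectrum_iff_det', mem_spectrum_iff_det', mem_spectrum_iff_det', key, mul_eq_zero,
    ← hA, hnegdet]
end
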